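/- CookieMerge never overrides an httpOnly cookie: if c_old appears in oldcookies with c_old.content.httpOnly = True, then c_old ∈ CookieMerge(oldcookies, newcookies), i.e., the merged set contains the old cookie unchanged for that name. -/

import Mathlib

/-- A cookie `⟨name, ⟨value, secure, session, httpOnly⟩⟩`. -/
structure Cookie where
  name : String
  value : String
  secure : Bool
  session : Bool
  httpOnly : Bool
deriving DecidableEq

/-- From a list of cookies, keep for each name only the last (rightmost) occurrence,
preserving the order of the kept cookies. -/
def keepLast (l : List Cookie) : List Cookie :=
  ((l.zipIdx.map Prod.swap).filter fun p => decide (∀ q ∈ l.zipIdx.map Prod.swap, q.2.name = p.2.name → q.1 ≤ p.1)).map Prod.snd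

/-- The `CookieMerge` algorithm (RFC6265 storage mechanism, simplified): first remove
from `newcookies` all httpOnly cookies and deduplicate by name (keeping the rightmost);
then the result consists of all cookies whose name appears in exactly one of the two
sequences together with, for each name appearing in both, the new cookie if the old
cookie is not httpOnly, and the old cookie otherwise. -/
def CookieMerge (oldcookies newcookies : List Cookie) : Set Cookie :=
  let new' := keepLast (newcookies.filter fun c => !c.httpOnly)
  {c | (c ∈ oldcookies ∧ ∀ c' ∈ new', c'.name ≠ c.name)
     ∨ (c ∈ new' ∧ ∀ c' ∈ oldcookies, c'.name ≠ c.name)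
     ∨ (∃ cold ∈ oldcookies, ∃ cnew ∈ new', cold.name = cnew.name ∧
         ((cold.httpOnly = false ∧ c = cnew) ∨ (cold.httpOnly = true ∧ c = cold)))}

theorem stmt10_general (oldcookies newcookies : List Cookie)
    (cold : Cookie) (hmem : cold ∈ oldcookies) (hhttp : cold.httpOnly = true) :
    cold ∈ CookieMerge oldcookies newcookies := by
  by_cases h : ∃ cnew ∈ keepLast (newcookies.filter fun c => !c.httpOnly), cold.name = cnew.name
  · obtain ⟨cnew, hcnew, hname⟩ := h
    exact Or.inr <| Or.inr ⟨cold, hmem, cnew, hcnew, hname, Or.inr ⟨hhttp, rfl⟩⟩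
  · exact Or.inl ⟨hmem, fun cnew hcnew hname => h ⟨cnew, hcnew, hname.symm⟩⟩

/-- `CookieMerge` never overrides an httpOnly cookie: an old cookie with
`httpOnly = True` is contained unchanged in the merged set. -/
theorem stmt10 (oldcookies newcookies : List Cookie)
    (hold : (oldcookies.map Cookie.name).Nodup)
    (cold : Cookie) (hmem : cold ∈ oldcookies) (hhttp : cold.httpOnly = true) :
    cold ∈ CookieMerge oldcookies newcookies :=
  stmt10_general oldcookies newcookies cold hmem hhttp
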